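/- The split primitive preserves point-set semantics: for any temporal relation R, start time s, and window width w > 0, the relation split_{s,w}(R) covers exactly the same time points for each value as R does. -/

import Mathlib

/-- Point-set semantics over the integer time domain. -/
def semZ {α : Type*} (R : Set (α × ℤ × ℤ)) (x : α) : Set ℤ :=
  {t | ∃ a b, (x, a, b) ∈ R ∧ a ≤ t ∧ t < b}

/-- `split s w R` replaces each tuple `(x,[a,b))` by its nonempty
intersections with the windows `[s+k·w, s+(k+1)·w)`, `k ≥ 0`. -/
def split {α : Type*} (s w : ℤ) (R : Set (α × ℤ × ℤ)) : Set (α × ℤ × ℤ) :=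
  {p | ∃ a b k, (p.1, a, b) ∈ R ∧ 0 ≤ k ∧
    p.2.1 = max a (s + k * w) ∧ p.2.2 = min b (s + (k + 1) * w) ∧
    p.2.1 < p.2.2}

/-! Every point of `[a, b)` lies in the piece cut out by the window containing it; that window has
index `⌊(t - s) / w⌋ ≥ 0` because intervals start at or after `s`. Conversely each piece is a
subinterval of its source interval. -/

theorem exists_window_mem {s w t : ℤ} (hw : 0 < w) (hst : s ≤ t) :
    ∃ k : ℤ, 0 ≤ k ∧ s + k * w ≤ t ∧ t < s + (k + 1) * w :=
  ⟨(t - s) / w, Int.ediv_nonneg (by omega) hw.le,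
    by linarith [Int.ediv_mul_le (t - s) hw.ne'],
    by linarith [Int.lt_ediv_add_one_mul_self (t - s) hw]⟩

theorem semZ_split_subset {α : Type*} (s w : ℤ) (R : Set (α × ℤ × ℤ)) (x : α) :
    semZ (split s w R) x ⊆ semZ R x := by
  rintro t ⟨_, _, ⟨a, b, k, hR, -, rfl, rfl, -⟩, hat, htb⟩
  exact ⟨a, b, hR, (le_max_left _ _).trans hat, htb.trans_le (min_le_left _ _)⟩

theorem semZ_subset_semZ_split {α : Type*} {s w : ℤ} (hw : 0 < w) {R : Set (α × ℤ × ℤ)}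
    (hstart : ∀ x a b, (x, a, b) ∈ R → s ≤ a) (x : α) :
    semZ R x ⊆ semZ (split s w R) x := by
  rintro t ⟨a, b, hR, hat, htb⟩
  obtain ⟨k, hk, hlow, hhigh⟩ := exists_window_mem hw ((hstart x a b hR).trans hat)
  have hlo : max a (s + k * w) ≤ t := max_le hat hlow
  have hhi : t < min b (s + (k + 1) * w) := lt_min htb hhigh
  exact ⟨_, _, ⟨a, b, k, hR, hk, rfl, rfl, hlo.trans_lt hhi⟩, hlo, hhi⟩

theorem split_preserves_sem_general {α : Type*} (s w : ℤ) (hw : 0 < w)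
    (R : Set (α × ℤ × ℤ))
    (hstart : ∀ x a b, (x, a, b) ∈ R → s ≤ a) :
    semZ (split s w R) = semZ R :=
  funext fun x =>
    (semZ_split_subset s w R x).antisymm (semZ_subset_semZ_split hw hstart x)

/-- Split preserves point-set semantics. -/
theorem split_preserves_sem {α : Type*} (s w : ℤ) (hw : 0 < w)
    (R : Set (α × ℤ × ℤ)) (hfin : R.Finite)
    (hvalid : ∀ x a b, (x, a, b) ∈ R → a < b)
    (hstart : ∀ x a b, (x, a, b) ∈ R → s ≤ a) :
    semZ (split s w R) = semZ R :=
  split_preserves_sem_general s w hw R hstart
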